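/- Let H be a Hilbert space and A : X → B(H) a continuous family (operator norm) of operators with A(x)*A(x) − 1 and A(x)A(x)* − 1 compact for each x, over a topological space X. Suppose U ⊆ X is open and μ ∈ (0,1) lies in the resolvent set of Â(x)² for every x ∈ U, where Â(x) is the associated degree-1 self-adjoint operator on Ĥ = H ⊕ H. Then the function x ↦ dim (Ĥ, Â(x))_{<μ} is locally constant on U. -/

import Mathlib

/-- The degree-1 self-adjoint operator `Â = [[0, A*],[A, 0]]` on `Ĥ = H ⊕ H` associated to
a bounded operator `A` on `H`. -/
noncomputable def Ahat {H : Type*} [NormedAddCommGroup H] [InnerProductSpace ℂ H]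
    [CompleteSpace H] (A : H →L[ℂ] H) : (H × H) →L[ℂ] (H × H) :=
  ((ContinuousLinearMap.adjoint A).comp (ContinuousLinearMap.snd ℂ H H)).prod
    (A.comp (ContinuousLinearMap.fst ℂ H H))

/-!
Transport `Â(x)` to the Hilbert space `Ĥ` and put `T(x) = Â(x)²`: it is self-adjoint and
`T(x) - 1` is compact. As `μ` is not in the spectrum of `T(x)` for `x ∈ U`, the spectral projection
`P(x) = 1_{(-∞, μ)}(T(x))` comes from the continuous functional calculus with a function that is
continuous off `μ`, so `x ↦ P(x)` is norm-continuous on `U`. Factoring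
`1_{(-∞, μ)}(t) = g(t) (t - l)` with `g` continuous off `μ` (for `l ≥ μ`) shows that `P(x)` kills
the eigenvectors of eigenvalue `l ≥ μ` and, taking `l = 1`, that `P(x) = g(T(x)) (T(x) - 1)` is
compact; symmetrically `1 - P(x)` kills those of eigenvalue `l < μ`. So the range of `P(x)` is
finite-dimensional, hence spanned by eigenvectors of `T(x)`, and equals `(Ĥ, Â(x))_{<μ}`. Two
idempotents at distance less than `1` have ranges of the same dimension.
-/

open Set Filter Topology

lemma continuousOn_ite_lt {μ : ℝ} {s : Set ℝ} (hμ : μ ∉ s) {f g : ℝ → ℝ}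
    (hf : ContinuousOn f (Iio μ)) (hg : ContinuousOn g (Ioi μ)) :
    ContinuousOn (fun t ↦ if t < μ then f t else g t) s := by
  refine ContinuousOn.mono ?_ (subset_compl_singleton_iff.2 hμ)
  rw [← Iio_union_Ioi]
  exact (hf.congr fun t ht ↦ if_pos ht).union_of_isOpen
    (hg.congr fun t ht ↦ if_neg (not_lt.2 (le_of_lt (show μ < t from ht)))) isOpen_Iio isOpen_Ioi

lemma cfc_mul_sub_algebraMap {A : Type*} [Ring A] [StarRing A] [Algebra ℝ A] [TopologicalSpace A]
    [ContinuousFunctionalCalculus ℝ A IsSelfAdjoint] {a : A} (ha : IsSelfAdjoint a) (g : ℝ → ℝ)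
    (l : ℝ) (hg : ContinuousOn g (spectrum ℝ a)) :
    cfc (fun t ↦ g t * (t - l)) a = cfc g a * (a - algebraMap ℝ A l) := by
  rw [cfc_mul g (fun t ↦ t - l) a, cfc_sub (fun t ↦ t) (fun _ ↦ l) a, cfc_id' ℝ a, cfc_const l a]

section Idempotent

variable {𝕜 E : Type*} [NontriviallyNormedField 𝕜] [NormedAddCommGroup E] [NormedSpace 𝕜 E]

lemma IsIdempotentElem.apply_of_mem_range {P : E →L[𝕜] E}
    (hP : IsIdempotentElem P) {v : E} (hv : v ∈ LinearMap.range (P : E →ₗ[𝕜] E)) : P v = v :=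
  LinearMap.IsIdempotentElem.mem_range_iff (ContinuousLinearMap.IsIdempotentElem.toLinearMap hP)
    |>.1 hv

theorem rank_range_le_of_norm_sub_lt_one {P Q : E →L[𝕜] E} (hP : IsIdempotentElem P)
    (hPQ : ‖P - Q‖ < 1) :
    Module.rank 𝕜 (LinearMap.range (P : E →ₗ[𝕜] E)) ≤
      Module.rank 𝕜 (LinearMap.range (Q : E →ₗ[𝕜] E)) := by
  refine LinearMap.rank_le_of_injective
    ((Q : E →ₗ[𝕜] E).restrict (p := LinearMap.range (P : E →ₗ[𝕜] E))
      (q := LinearMap.range (Q : E →ₗ[𝕜] E)) fun v _ ↦ LinearMap.mem_range_self _ v)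
    (injective_iff_map_eq_zero _ |>.2 fun ⟨v, hv⟩ hQv ↦ ?_)
  replace hQv : Q v = 0 := congrArg Subtype.val hQv
  have : ‖v‖ ≤ ‖P - Q‖ * ‖v‖ := by
    simpa [hQv, hP.apply_of_mem_range hv] using (P - Q).le_opNorm v
  ext1
  exact norm_le_zero_iff.1 (by nlinarith [norm_nonneg v])

theorem finrank_range_eq_of_norm_sub_lt_one {P Q : E →L[𝕜] E} (hP : IsIdempotentElem P)
    (hQ : IsIdempotentElem Q) (hPQ : ‖P - Q‖ < 1) :
    Module.finrank 𝕜 (LinearMap.range (P : E →ₗ[𝕜] E)) =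
      Module.finrank 𝕜 (LinearMap.range (Q : E →ₗ[𝕜] E)) :=
  congrArg Cardinal.toNat <| le_antisymm (rank_range_le_of_norm_sub_lt_one hP hPQ)
    (rank_range_le_of_norm_sub_lt_one hQ (by rwa [norm_sub_rev]))

theorem IsIdempotentElem.finiteDimensional_range [CompleteSpace 𝕜] {P : E →L[𝕜] E}
    (hP : IsIdempotentElem P) (hc : IsCompactOperator P) :
    FiniteDimensional 𝕜 (LinearMap.range (P : E →ₗ[𝕜] E)) := by
  have hid : (P : E →ₗ[𝕜] E).restrict (p := LinearMap.range (P : E →ₗ[𝕜] E))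
      (fun v _ ↦ LinearMap.mem_range_self _ v) = LinearMap.id :=
    LinearMap.ext fun ⟨_, hv⟩ ↦ Subtype.ext (hP.apply_of_mem_range hv)
  have h := hc.restrict (fun v _ ↦ LinearMap.mem_range_self _ v)
    (ContinuousLinearMap.IsIdempotentElem.isClosed_range hP)
  rw [hid, LinearMap.id_coe] at h
  exact .of_isCompactOperator_id h

end Idempotent

/-- The paper's `(M, f)_{<μ}`. -/
def eigenspacesBelow {M : Type*} [AddCommGroup M] [Module ℂ M] (f : Module.End ℂ M) (μ : ℝ) :
    Submodule ℂ M :=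
  ⨆ l : {l : ℝ // l < μ}, f.eigenspace (l : ℂ)

lemma Module.End.eigenspace_conj {R M N : Type*} [CommRing R] [AddCommGroup M] [Module R M]
    [AddCommGroup N] [Module R N] (e : M ≃ₗ[R] N) (f : Module.End R M) (c : R) :
    (e.conj f).eigenspace c = (f.eigenspace c).map (e : M →ₗ[R] N) := by
  ext v
  rw [Submodule.mem_map_equiv, Module.End.mem_eigenspace_iff, Module.End.mem_eigenspace_iff,
    LinearEquiv.conj_apply_apply, ← e.symm.injective.eq_iff, e.symm_apply_apply, map_smul]

lemma finrank_eigenspacesBelow_conj {M N : Type*} [AddCommGroup M] [Module ℂ M] [AddCommGroup N]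
    [Module ℂ N] (e : M ≃ₗ[ℂ] N) (f : Module.End ℂ M) (μ : ℝ) :
    Module.finrank ℂ (eigenspacesBelow (e.conj f) μ) = Module.finrank ℂ (eigenspacesBelow f μ) := by
  have : eigenspacesBelow (e.conj f) μ = (eigenspacesBelow f μ).map (e : M →ₗ[ℂ] N) := by
    simp_rw [eigenspacesBelow, Submodule.map_iSup, Module.End.eigenspace_conj]
  rw [this]
  exact LinearEquiv.finrank_map_eq e _

section SpectralProjection

variable {E : Type*} [NormedAddCommGroup E] [InnerProductSpace ℂ E] [CompleteSpace E]

noncomputable def spectralProjectionBelow (T : E →L[ℂ] E) (μ : ℝ) : E →L[ℂ] E :=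
  cfc (fun t : ℝ ↦ if t < μ then (1 : ℝ) else 0) T

variable {T : E →L[ℂ] E} {μ : ℝ}

lemma isIdempotentElem_spectralProjectionBelow (hμ : μ ∉ spectrum ℝ T) :
    IsIdempotentElem (spectralProjectionBelow T μ) := by
  have hf : ContinuousOn (fun t : ℝ ↦ if t < μ then (1 : ℝ) else 0) (spectrum ℝ T) :=
    continuousOn_ite_lt hμ continuousOn_const continuousOn_const
  rw [IsIdempotentElem, spectralProjectionBelow, ← cfc_mul _ _ T hf hf]
  congr! 2 with t
  split_ifs <;> norm_num

lemma spectralProjectionBelow_eq_mul (hT : IsSelfAdjoint T) (hμ : μ ∉ spectrum ℝ T) {l : ℝ}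
    (hl : μ ≤ l) :
    spectralProjectionBelow T μ =
      cfc (fun t ↦ if t < μ then (t - l)⁻¹ else 0) T * (T - algebraMap ℝ _ l) := by
  have hg : ContinuousOn (fun t ↦ if t < μ then (t - l)⁻¹ else 0) (spectrum ℝ T) :=
    continuousOn_ite_lt hμ (f := fun t ↦ (t - l)⁻¹) (ContinuousOn.inv₀ (by fun_prop)
      fun t ht ↦ sub_ne_zero.2 (lt_of_lt_of_le ht hl).ne) continuousOn_const
  rw [← cfc_mul_sub_algebraMap hT _ l hg, spectralProjectionBelow]
  congr! 2 with t
  split_ifs with ht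
  · rw [inv_mul_cancel₀ (sub_ne_zero.2 (lt_of_lt_of_le ht hl).ne)]
  · rw [zero_mul]

lemma one_sub_spectralProjectionBelow_eq_mul (hT : IsSelfAdjoint T) (hμ : μ ∉ spectrum ℝ T)
    {l : ℝ} (hl : l < μ) :
    1 - spectralProjectionBelow T μ =
      cfc (fun t ↦ if t < μ then 0 else (t - l)⁻¹) T * (T - algebraMap ℝ _ l) := by
  have hg : ContinuousOn (fun t ↦ if t < μ then 0 else (t - l)⁻¹) (spectrum ℝ T) :=
    continuousOn_ite_lt hμ (g := fun t ↦ (t - l)⁻¹) continuousOn_const (ContinuousOn.inv₀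
      (by fun_prop) fun t ht ↦ sub_ne_zero.2 (hl.trans ht).ne')
  rw [← cfc_mul_sub_algebraMap hT _ l hg, spectralProjectionBelow,
    ← map_one (algebraMap ℝ (E →L[ℂ] E)), ← cfc_const (1 : ℝ) T,
    ← cfc_sub _ _ T continuousOn_const
      (continuousOn_ite_lt hμ continuousOn_const continuousOn_const)]
  congr! 2 with t
  split_ifs with ht
  · rw [zero_mul, sub_self]
  · rw [inv_mul_cancel₀ (sub_ne_zero.2 (hl.trans_le (not_lt.1 ht)).ne'), sub_zero]

lemma spectralProjectionBelow_apply_of_le (hT : IsSelfAdjoint T) (hμ : μ ∉ spectrum ℝ T)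
    {l : ℝ} (hl : μ ≤ l) {v : E} (hv : T v = l • v) : spectralProjectionBelow T μ v = 0 := by
  rw [spectralProjectionBelow_eq_mul hT hμ hl, mul_apply_eq_comp, sub_apply,
    ContinuousLinearMap.algebraMap_apply, hv, sub_self, map_zero]

lemma spectralProjectionBelow_apply_of_lt (hT : IsSelfAdjoint T) (hμ : μ ∉ spectrum ℝ T)
    {l : ℝ} (hl : l < μ) {v : E} (hv : T v = l • v) : spectralProjectionBelow T μ v = v := by
  have h := congrArg (· v) (one_sub_spectralProjectionBelow_eq_mul hT hμ hl)
  simp only [mul_apply_eq_comp, sub_apply, ContinuousLinearMap.algebraMap_apply, hv, sub_self,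
    map_zero, one_apply_eq_self] at h
  exact (sub_eq_zero.1 h).symm

lemma isCompactOperator_spectralProjectionBelow (hT : IsSelfAdjoint T) (hμ : μ ∉ spectrum ℝ T)
    (hμ1 : μ < 1) (hK : IsCompactOperator (T - 1 : E →L[ℂ] E)) :
    IsCompactOperator (spectralProjectionBelow T μ) := by
  rw [spectralProjectionBelow_eq_mul hT hμ hμ1.le, map_one, ContinuousLinearMap.mul_def]
  exact hK.clm_comp _

lemma commute_spectralProjectionBelow (hT : IsSelfAdjoint T) :
    Commute T (spectralProjectionBelow T μ) := by
  have h := cfc_commute_cfc (fun t : ℝ ↦ t) (fun t : ℝ ↦ if t < μ then (1 : ℝ) else 0) T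
  rwa [cfc_id' ℝ T hT] at h

lemma eigenspacesBelow_le_range_spectralProjectionBelow (hT : IsSelfAdjoint T)
    (hμ : μ ∉ spectrum ℝ T) :
    eigenspacesBelow (T : E →ₗ[ℂ] E) μ ≤
      LinearMap.range (spectralProjectionBelow T μ : E →ₗ[ℂ] E) :=
  iSup_le fun ⟨l, hl⟩ v hv ↦ ⟨v, spectralProjectionBelow_apply_of_lt hT hμ hl <| by
    rw [← Complex.coe_smul]; exact Module.End.mem_eigenspace_iff.1 hv⟩

lemma mem_eigenspacesBelow_of_mem_range (hT : IsSelfAdjoint T) (hμ : μ ∉ spectrum ℝ T)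
    {w : E} (hw : w ∈ LinearMap.range (spectralProjectionBelow T μ : E →ₗ[ℂ] E)) {c : ℂ}
    (hTw : T w = c • w) : w ∈ eigenspacesBelow (T : E →ₗ[ℂ] E) μ := by
  rcases eq_or_ne w 0 with rfl | hw0
  · exact zero_mem _
  have hc : c = (c.re : ℂ) := (Complex.conj_eq_iff_re.1 <| hT.isSymmetric.conj_eigenvalue_eq_self
    (Module.End.hasEigenvalue_of_hasEigenvector ⟨Module.End.mem_eigenspace_iff.2 hTw, hw0⟩)).symm
  rw [hc, Complex.coe_smul] at hTw
  have hlt : c.re < μ := by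
    by_contra! h
    apply hw0
    rw [← (isIdempotentElem_spectralProjectionBelow hμ).apply_of_mem_range hw]
    exact spectralProjectionBelow_apply_of_le hT hμ h hTw
  exact Submodule.mem_iSup_of_mem (⟨c.re, hlt⟩ : {l : ℝ // l < μ})
    (Module.End.mem_eigenspace_iff.2 (by rw [Complex.coe_smul]; exact hTw))

lemma range_spectralProjectionBelow_le_eigenspacesBelow (hT : IsSelfAdjoint T)
    (hμ : μ ∉ spectrum ℝ T)
    [FiniteDimensional ℂ (LinearMap.range (spectralProjectionBelow T μ : E →ₗ[ℂ] E))] :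
    LinearMap.range (spectralProjectionBelow T μ : E →ₗ[ℂ] E) ≤
      eigenspacesBelow (T : E →ₗ[ℂ] E) μ := by
  set W := LinearMap.range (spectralProjectionBelow T μ : E →ₗ[ℂ] E)
  have hW : ∀ v ∈ W, (T : E →ₗ[ℂ] E) v ∈ W := by
    rintro _ ⟨u, rfl⟩
    exact ⟨T u, congrArg (· u) (commute_spectralProjectionBelow hT).eq.symm⟩
  have htop : ⨆ c, Module.End.eigenspace ((T : E →ₗ[ℂ] E).restrict hW) c = ⊤ := by
    have := (hT.isSymmetric.restrict_invariant hW).orthogonalComplement_iSup_eigenspaces_eq_bot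
    rwa [Submodule.orthogonal_eq_bot_iff] at this
  intro w hw
  have hw' : (⟨w, hw⟩ : W) ∈ ⨆ c, Module.End.eigenspace ((T : E →ₗ[ℂ] E).restrict hW) c :=
    htop ▸ Submodule.mem_top
  have h := Submodule.mem_map_of_mem (f := W.subtype) hw'
  rw [Submodule.map_iSup] at h
  refine (iSup_le fun c ↦ ?_ : _ ≤ eigenspacesBelow (T : E →ₗ[ℂ] E) μ) h
  rintro _ ⟨⟨x, hxW⟩, hx, rfl⟩
  exact mem_eigenspacesBelow_of_mem_range hT hμ hxW
    (congrArg Subtype.val (Module.End.mem_eigenspace_iff.1 hx))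

theorem range_spectralProjectionBelow (hT : IsSelfAdjoint T) (hμ : μ ∉ spectrum ℝ T)
    (hμ1 : μ < 1) (hK : IsCompactOperator (T - 1 : E →L[ℂ] E)) :
    LinearMap.range (spectralProjectionBelow T μ : E →ₗ[ℂ] E) =
      eigenspacesBelow (T : E →ₗ[ℂ] E) μ :=
  have := (isIdempotentElem_spectralProjectionBelow hμ).finiteDimensional_range
    (isCompactOperator_spectralProjectionBelow hT hμ hμ1 hK)
  le_antisymm (range_spectralProjectionBelow_le_eigenspacesBelow hT hμ)
    (eigenspacesBelow_le_range_spectralProjectionBelow hT hμ)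

end SpectralProjection

theorem eventually_finrank_eigenspacesBelow_eq {X E : Type*} [TopologicalSpace X]
    [NormedAddCommGroup E] [InnerProductSpace ℂ E] [CompleteSpace E]
    {T : X → E →L[ℂ] E} (hT : Continuous T) (hsa : ∀ x, IsSelfAdjoint (T x))
    (hK : ∀ x, IsCompactOperator (T x - 1 : E →L[ℂ] E)) {U : Set X} (hU : IsOpen U) {μ : ℝ}
    (hμ1 : μ < 1) (hres : ∀ x ∈ U, μ ∉ spectrum ℝ (T x)) {x₀ : X} (hx₀ : x₀ ∈ U) :
    ∀ᶠ x in 𝓝 x₀, Module.finrank ℂ (eigenspacesBelow (T x : E →ₗ[ℂ] E) μ) =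
      Module.finrank ℂ (eigenspacesBelow (T x₀ : E →ₗ[ℂ] E) μ) := by
  have hP : ContinuousOn (fun x ↦ spectralProjectionBelow (T x) μ) U :=
    ContinuousOn.cfc_of_mem_nhdsSet _ (isOpen_compl_singleton.mem_nhdsSet.2 (by simpa using hres))
      hT.continuousOn (fun x _ ↦ hsa x)
      (continuousOn_ite_lt (by simp) continuousOn_const continuousOn_const)
  filter_upwards [(hP.continuousAt (hU.mem_nhds hx₀)).eventually (Metric.ball_mem_nhds _ one_pos),
    hU.mem_nhds hx₀] with x hclose hx
  rw [dist_eq_norm] at hclose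
  rw [← range_spectralProjectionBelow (hsa x) (hres x hx) hμ1 (hK x),
    ← range_spectralProjectionBelow (hsa x₀) (hres x₀ hx₀) hμ1 (hK x₀)]
  exact finrank_range_eq_of_norm_sub_lt_one (isIdempotentElem_spectralProjectionBelow (hres x hx))
    (isIdempotentElem_spectralProjectionBelow (hres x₀ hx₀)) hclose

section Conjugation

variable {𝕜 E F : Type*} [NontriviallyNormedField 𝕜] [NormedAddCommGroup E] [NormedSpace 𝕜 E]
  [NormedAddCommGroup F] [NormedSpace 𝕜 F]

lemma ContinuousLinearEquiv.toLinearMap_conjContinuousAlgEquiv (e : E ≃L[𝕜] F)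
    (G : E →L[𝕜] E) :
    ((e.conjContinuousAlgEquiv G : F →L[𝕜] F) : F →ₗ[𝕜] F) = e.toLinearEquiv.conj (G : E →ₗ[𝕜] E) :=
  rfl

lemma IsCompactOperator.conjContinuousAlgEquiv (e : E ≃L[𝕜] F) {K : E →L[𝕜] E}
    (hK : IsCompactOperator K) : IsCompactOperator (e.conjContinuousAlgEquiv K) :=
  (hK.comp_clm (e.symm : F →L[𝕜] E)).clm_comp (e : E →L[𝕜] F)

lemma IsCompactOperator.prodMap {f : E →L[𝕜] E} {g : F →L[𝕜] F} (hf : IsCompactOperator f)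
    (hg : IsCompactOperator g) : IsCompactOperator (f.prodMap g) := by
  have h : ⇑(f.prodMap g) = fun u ↦ ContinuousLinearMap.inl 𝕜 E F (f u.1) +
      ContinuousLinearMap.inr 𝕜 E F (g u.2) := by
    ext u <;> simp
  rw [h]
  exact ((hf.comp_clm (.fst 𝕜 E F)).clm_comp (.inl 𝕜 E F)).add
    ((hg.comp_clm (.snd 𝕜 E F)).clm_comp (.inr 𝕜 E F))

end Conjugation

section Ahat

variable {H : Type*} [NormedAddCommGroup H] [InnerProductSpace ℂ H] [CompleteSpace H]

open ContinuousLinearMap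

lemma Ahat_sq_sub_one (A : H →L[ℂ] H) :
    Ahat A ^ 2 - 1 = (adjoint A * A - 1).prodMap (A * adjoint A - 1) := by
  ext u <;> simp [Ahat, sq]

lemma continuous_Ahat : Continuous (Ahat : (H →L[ℂ] H) → (H × H) →L[ℂ] (H × H)) :=
  (prodₗᵢ ℂ).continuous.comp <|
    ((adjoint : (H →L[ℂ] H) ≃ₗᵢ⋆[ℂ] (H →L[ℂ] H)).continuous.clm_comp continuous_const).prodMk
      (continuous_id.clm_comp continuous_const)

/-- `Â` on `Ĥ = WithLp 2 (H × H)`: `H × H` itself carries the sup norm and is not an inner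
product space, so self-adjointness and the spectral calculus need this transport. -/
noncomputable def AhatL2 (A : H →L[ℂ] H) : WithLp 2 (H × H) →L[ℂ] WithLp 2 (H × H) :=
  (WithLp.prodContinuousLinearEquiv 2 ℂ H H).symm.conjContinuousAlgEquiv (Ahat A)

lemma AhatL2_sq (A : H →L[ℂ] H) :
    AhatL2 A ^ 2 =
      (WithLp.prodContinuousLinearEquiv 2 ℂ H H).symm.conjContinuousAlgEquiv (Ahat A ^ 2) :=
  (map_pow _ _ _).symm

lemma continuous_AhatL2 :
    Continuous (AhatL2 : (H →L[ℂ] H) → WithLp 2 (H × H) →L[ℂ] WithLp 2 (H × H)) :=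
  (WithLp.prodContinuousLinearEquiv 2 ℂ H H).symm.conjContinuousAlgEquiv.continuous.comp
    continuous_Ahat

lemma isSelfAdjoint_AhatL2 (A : H →L[ℂ] H) : IsSelfAdjoint (AhatL2 A) := by
  rw [isSelfAdjoint_iff_isSymmetric]
  intro u w
  simp [AhatL2, WithLp.prod_inner_apply, Ahat, adjoint_inner_left, adjoint_inner_right]
  ring

lemma isCompactOperator_AhatL2_sq_sub_one {A : H →L[ℂ] H}
    (h₁ : IsCompactOperator (adjoint A * A - 1 : H →L[ℂ] H))
    (h₂ : IsCompactOperator (A * adjoint A - 1 : H →L[ℂ] H)) :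
    IsCompactOperator (AhatL2 A ^ 2 - 1 : WithLp 2 (H × H) →L[ℂ] WithLp 2 (H × H)) := by
  rw [AhatL2_sq, ← map_one (WithLp.prodContinuousLinearEquiv 2 ℂ H H).symm.conjContinuousAlgEquiv,
    ← map_sub, Ahat_sq_sub_one]
  exact (h₁.prodMap h₂).conjContinuousAlgEquiv _

lemma spectrum_AhatL2_sq (A : H →L[ℂ] H) :
    spectrum ℂ (AhatL2 A ^ 2) = spectrum ℂ (Ahat A ^ 2) := by
  rw [AhatL2_sq]
  exact AlgEquiv.spectrum_eq
    (WithLp.prodContinuousLinearEquiv 2 ℂ H H).symm.conjContinuousAlgEquiv.toAlgEquiv _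

lemma finrank_eigenspacesBelow_AhatL2_sq (A : H →L[ℂ] H) (μ : ℝ) :
    Module.finrank ℂ (eigenspacesBelow ((AhatL2 A ^ 2 : WithLp 2 (H × H) →L[ℂ] WithLp 2 (H × H)) :
        WithLp 2 (H × H) →ₗ[ℂ] WithLp 2 (H × H)) μ) =
      Module.finrank ℂ (eigenspacesBelow ((Ahat A ^ 2 : (H × H) →L[ℂ] (H × H)) :
        (H × H) →ₗ[ℂ] (H × H)) μ) := by
  rw [AhatL2_sq, ContinuousLinearEquiv.toLinearMap_conjContinuousAlgEquiv,
    finrank_eigenspacesBelow_conj]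

end Ahat

theorem stmt19_general (X : Type*) [TopologicalSpace X]
    (H : Type*) [NormedAddCommGroup H] [InnerProductSpace ℂ H] [CompleteSpace H]
    (A : X → (H →L[ℂ] H)) (hcont : Continuous A)
    (hcpt₁ : ∀ x, IsCompactOperator
      ((ContinuousLinearMap.adjoint (A x)) * (A x) - 1 : H →L[ℂ] H))
    (hcpt₂ : ∀ x, IsCompactOperator
      ((A x) * (ContinuousLinearMap.adjoint (A x)) - 1 : H →L[ℂ] H))
    (U : Set X) (hU : IsOpen U)
    (μ : ℝ) (hμ1 : μ < 1)
    (hres : ∀ x ∈ U, (μ : ℂ) ∉ spectrum ℂ ((Ahat (A x)) ^ 2)) :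
    ∀ x₀ ∈ U, ∃ V : Set X, IsOpen V ∧ x₀ ∈ V ∧ V ⊆ U ∧ ∀ x ∈ V,
      Module.finrank ℂ
          ↥(⨆ l : {l : ℝ // l < μ},
              Module.End.eigenspace
                (((Ahat (A x)) ^ 2 : (H × H) →L[ℂ] (H × H)) : (H × H) →ₗ[ℂ] (H × H))
                (l : ℂ)) =
        Module.finrank ℂ
          ↥(⨆ l : {l : ℝ // l < μ},
              Module.End.eigenspace
                (((Ahat (A x₀)) ^ 2 : (H × H) →L[ℂ] (H × H)) : (H × H) →ₗ[ℂ] (H × H))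
                (l : ℂ)) := by
  intro x₀ hx₀
  have hres' : ∀ x ∈ U, μ ∉ spectrum ℝ (AhatL2 (A x) ^ 2) := fun x hx h ↦ by
    have := spectrum.algebraMap_mem ℂ h
    rw [spectrum_AhatL2_sq, Complex.coe_algebraMap] at this
    exact hres x hx this
  obtain ⟨V, hV, hVo, hx₀V⟩ := eventually_nhds_iff.1 <| eventually_finrank_eigenspacesBelow_eq
    (T := fun x ↦ AhatL2 (A x) ^ 2) ((continuous_AhatL2.comp hcont).pow 2)
    (fun x ↦ (isSelfAdjoint_AhatL2 (A x)).pow 2)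
    (fun x ↦ isCompactOperator_AhatL2_sq_sub_one (hcpt₁ x) (hcpt₂ x)) hU hμ1 hres' hx₀
  refine ⟨V ∩ U, hVo.inter hU, ⟨hx₀V, hx₀⟩, inter_subset_right, fun x hx ↦ ?_⟩
  have := hV x hx.1
  rwa [finrank_eigenspacesBelow_AhatL2_sq, finrank_eigenspacesBelow_AhatL2_sq] at this

/-- Let `A : X → B(H)` be a norm-continuous family with `A(x)*A(x) − 1` and
`A(x)A(x)* − 1` compact, `U ⊆ X` open, and `μ ∈ (0,1)` in the resolvent set of `Â(x)²`
for all `x ∈ U`. Then `x ↦ dim (Ĥ, Â(x))_{<μ}` is locally constant on `U`. -/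
theorem stmt19 (X : Type*) [TopologicalSpace X]
    (H : Type*) [NormedAddCommGroup H] [InnerProductSpace ℂ H] [CompleteSpace H]
    (A : X → (H →L[ℂ] H)) (hcont : Continuous A)
    (hcpt₁ : ∀ x, IsCompactOperator
      ((ContinuousLinearMap.adjoint (A x)) * (A x) - 1 : H →L[ℂ] H))
    (hcpt₂ : ∀ x, IsCompactOperator
      ((A x) * (ContinuousLinearMap.adjoint (A x)) - 1 : H →L[ℂ] H))
    (U : Set X) (hU : IsOpen U)
    (μ : ℝ) (hμ0 : 0 < μ) (hμ1 : μ < 1)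
    (hres : ∀ x ∈ U, (μ : ℂ) ∉ spectrum ℂ ((Ahat (A x)) ^ 2)) :
    ∀ x₀ ∈ U, ∃ V : Set X, IsOpen V ∧ x₀ ∈ V ∧ V ⊆ U ∧ ∀ x ∈ V,
      Module.finrank ℂ
          ↥(⨆ l : {l : ℝ // l < μ},
              Module.End.eigenspace
                (((Ahat (A x)) ^ 2 : (H × H) →L[ℂ] (H × H)) : (H × H) →ₗ[ℂ] (H × H))
                (l : ℂ)) =
        Module.finrank ℂ
          ↥(⨆ l : {l : ℝ // l < μ},
              Module.End.eigenspace
                (((Ahat (A x₀)) ^ 2 : (H × H) →L[ℂ] (H × H)) : (H × H) →ₗ[ℂ] (H × H))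
                (l : ℂ)) :=
  stmt19_general X H A hcont hcpt₁ hcpt₂ U hU μ hμ1 hres
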